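/- Let N be a norm on ℝ² and let p, q, w, u ∈ ℝ² with N(w) = N(u) = 1. Define h : ℝ² → ℝ by h(z) := N((p + z₁·w) − (q + z₂·u)). Then there exists a line ℓ ⊆ ℝ² of positive slope (i.e., ℓ = {z₀ + λ·d : λ ∈ ℝ} for some z₀ ∈ ℝ² and d ∈ ℝ² with d₁ > 0 and d₂ > 0) such that every z ∈ ℓ is a sink: the function t ↦ h(z₁ + t, z₂ − t) is non-increasing on (−∞, 0] and non-decreasing on [0, ∞). (Such a line ℓ is called a valley of positive slope.) -/

import Mathlib

/-- `N : ℝ × ℝ → ℝ` is a norm on `ℝ²`. -/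
def IsNorm (N : ℝ × ℝ → ℝ) : Prop :=
  (∀ z : ℝ × ℝ, 0 ≤ N z) ∧
  (∀ z : ℝ × ℝ, N z = 0 ↔ z = 0) ∧
  (∀ (c : ℝ) (z : ℝ × ℝ), N (c • z) = |c| * N z) ∧
  (∀ z w : ℝ × ℝ, N (z + w) ≤ N z + N w)


/-! Along the anti-diagonal, `t ↦ h (z.1 + t, z.2 - t)` is `t ↦ N (a z + t • (w + u))` with
`a z = p + z.1 • w - (q + z.2 • u)`, a convex function of `t`. Hence `z` is a sink as soon as
`a z` is Birkhoff–James orthogonal to `w + u`, i.e. nearest to the origin on its line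
`a z + ℝ (w + u)`. Since `a (z₀ + λ d) = a z₀ + λ (d.1 • w - d.2 • u)` and orthogonality is
invariant under scaling, it suffices, when `w` and `u` are independent, to take `a z₀ = 0` and
`d = (1 + s, 1 - s)`, where `s` minimises `N ((1 + s) • w - (1 - s) • u)`; that minimiser lies in
`(-1, 1)` because the values at `s = ±1` are `2 N w = 2 N u ≥ N (w - u)`. If `u = w`, `a` is
constant along `(1, 1)` and `z₀` is chosen with `a z₀` nearest to the origin on `a z₀ + ℝ w`;
if `u = -w`, then `w + u = 0` and every point is a sink.
-/

open Set

namespace IsNorm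

variable {N : ℝ × ℝ → ℝ}

lemma nonneg (hN : IsNorm N) (z : ℝ × ℝ) : 0 ≤ N z := hN.1 z

lemma pos (hN : IsNorm N) {z : ℝ × ℝ} (hz : z ≠ 0) : 0 < N z :=
  (hN.nonneg z).lt_of_ne fun h => hz ((hN.2.1 z).1 h.symm)

lemma map_zero (hN : IsNorm N) : N 0 = 0 := (hN.2.1 0).2 rfl

lemma map_smul (hN : IsNorm N) (c : ℝ) (z : ℝ × ℝ) : N (c • z) = |c| * N z := hN.2.2.1 c z

lemma map_neg (hN : IsNorm N) (z : ℝ × ℝ) : N (-z) = N z := by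
  simpa using hN.map_smul (-1) z

lemma add_le (hN : IsNorm N) (z z' : ℝ × ℝ) : N (z + z') ≤ N z + N z' := hN.2.2.2 z z'

lemma sub_le_add_smul (hN : IsNorm N) (a v : ℝ × ℝ) (t : ℝ) :
    |t| * N v - N a ≤ N (a + t • v) := by
  have h := hN.add_le (a + t • v) (-a)
  rw [hN.map_neg, add_neg_cancel_comm, hN.map_smul] at h
  linarith

lemma convexOn (hN : IsNorm N) : ConvexOn ℝ univ N := by
  refine ⟨convex_univ, fun x _ y _ a b ha hb _ => ?_⟩
  calc N (a • x + b • y) ≤ N (a • x) + N (b • y) := hN.add_le _ _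
    _ = a • N x + b • N y := by
      rw [hN.map_smul, hN.map_smul, abs_of_nonneg ha, abs_of_nonneg hb, smul_eq_mul, smul_eq_mul]

lemma convexOn_add_smul (hN : IsNorm N) (a v : ℝ × ℝ) :
    ConvexOn ℝ univ fun t : ℝ => N (a + t • v) := by
  have e : (fun t : ℝ => N (a + t • v)) = N ∘ AffineMap.lineMap a (a + v) := by
    ext t
    simp [AffineMap.lineMap_apply_module', add_comm]
  rw [e]
  exact hN.convexOn.comp_affineMap _

end IsNorm

section ConvexReal

variable {f : ℝ → ℝ} {s : Set ℝ} {x₀ : ℝ}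

lemma ConvexOn.monotoneOn_of_isMinOn (hf : ConvexOn ℝ s f) (hx₀ : x₀ ∈ s)
    (hmin : IsMinOn f s x₀) : MonotoneOn f (s ∩ Ici x₀) := by
  rintro x ⟨hx, hx₀x : x₀ ≤ x⟩ y ⟨hy, -⟩ hxy
  rcases hx₀x.eq_or_lt with rfl | hlt
  · exact hmin hy
  · exact hf.le_right_of_left_le'' hx₀ hy hlt hxy (hmin hx)

lemma ConvexOn.antitoneOn_of_isMinOn (hf : ConvexOn ℝ s f) (hx₀ : x₀ ∈ s)
    (hmin : IsMinOn f s x₀) : AntitoneOn f (s ∩ Iic x₀) := by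
  rintro x ⟨hx, -⟩ y ⟨hy, hyx₀ : y ≤ x₀⟩ hxy
  rcases hyx₀.eq_or_lt with rfl | hlt
  · exact hmin hx
  · exact hf.le_left_of_right_le'' hx hx₀ hxy hlt (hmin hy)

lemma ConvexOn.exists_isMinOn_mem_Ioo (hf : ConvexOn ℝ univ f) {a b c : ℝ} (hc : c ∈ Ioo a b)
    (hca : f c ≤ f a) (hcb : f c ≤ f b) : ∃ s ∈ Ioo a b, IsMinOn f univ s := by
  obtain ⟨s₀, hs₀, hmin₀⟩ := isCompact_Icc.exists_isMinOn (nonempty_Icc.2 (hc.1.trans hc.2).le)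
    ((hf.continuousOn isOpen_univ).mono (subset_univ _))
  obtain ⟨s, hs, hmin⟩ : ∃ s ∈ Ioo a b, IsMinOn f (Icc a b) s := by
    by_cases hs₀' : s₀ ∈ Ioo a b
    · exact ⟨s₀, hs₀', hmin₀⟩
    · refine ⟨c, hc, fun x hx => ?_⟩
      have hend : s₀ = a ∨ s₀ = b := by
        simp only [mem_Ioo, mem_Icc] at hs₀ hs₀'
        by_contra! h
        exact hs₀' ⟨lt_of_le_of_ne hs₀.1 h.1.symm, lt_of_le_of_ne hs₀.2 h.2⟩
      have hcs₀ : f c ≤ f s₀ := by rcases hend with rfl | rfl <;> assumption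
      exact hcs₀.trans (hmin₀ hx)
  exact ⟨s, hs, fun x _ => IsMinOn.of_isLocalMin_of_convex_univ
    (hmin.isLocalMin (Icc_mem_nhds hs.1 hs.2)) hf x⟩

end ConvexReal

def BirkhoffOrthogonal (N : ℝ × ℝ → ℝ) (a v : ℝ × ℝ) : Prop :=
  ∀ t : ℝ, N a ≤ N (a + t • v)

namespace BirkhoffOrthogonal

variable {N : ℝ × ℝ → ℝ} {a v : ℝ × ℝ}

lemma zero_right (N : ℝ × ℝ → ℝ) (a : ℝ × ℝ) : BirkhoffOrthogonal N a 0 := fun t => by simp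

lemma smul_right (h : BirkhoffOrthogonal N a v) (c : ℝ) : BirkhoffOrthogonal N a (c • v) :=
  fun t => by simpa [smul_smul] using h (t * c)

lemma smul_left (hN : IsNorm N) (h : BirkhoffOrthogonal N a v) (c : ℝ) :
    BirkhoffOrthogonal N (c • a) v := by
  intro t
  rcases eq_or_ne c 0 with rfl | hc
  · simpa [hN.map_zero] using hN.nonneg (t • v)
  · have e : c • a + t • v = c • (a + (t / c) • v) := by
      rw [smul_add, smul_smul, mul_div_cancel₀ _ hc]
    rw [e, hN.map_smul, hN.map_smul]
    exact mul_le_mul_of_nonneg_left (h _) (abs_nonneg c)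

lemma add_smul_iff {σ : ℝ} :
    BirkhoffOrthogonal N (a + σ • v) v ↔ IsMinOn (fun s : ℝ => N (a + s • v)) univ σ := by
  refine ⟨fun h s _ => ?_, fun h t => ?_⟩
  · simpa [add_assoc, ← add_smul] using h (s - σ)
  · simpa [add_assoc, ← add_smul] using h (mem_univ (σ + t))

lemma antitoneOn_monotoneOn (hN : IsNorm N) (h : BirkhoffOrthogonal N a v) :
    AntitoneOn (fun t : ℝ => N (a + t • v)) (Iic 0) ∧
      MonotoneOn (fun t : ℝ => N (a + t • v)) (Ici 0) := by
  have hmin : IsMinOn (fun t : ℝ => N (a + t • v)) univ 0 := fun t _ => by simpa using h t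
  have hconv := hN.convexOn_add_smul a v
  simpa using And.intro (hconv.antitoneOn_of_isMinOn (mem_univ 0) hmin)
    (hconv.monotoneOn_of_isMinOn (mem_univ 0) hmin)

end BirkhoffOrthogonal

namespace IsNorm

variable {N : ℝ × ℝ → ℝ}

lemma exists_birkhoffOrthogonal_add_smul (hN : IsNorm N) (a : ℝ × ℝ) {v : ℝ × ℝ} (hv : v ≠ 0) :
    ∃ σ : ℝ, BirkhoffOrthogonal N (a + σ • v) v := by
  have hvpos := hN.pos hv
  have hR₀ : 0 ≤ 2 * N a / N v := div_nonneg (by linarith [hN.nonneg a]) hvpos.le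
  set R := 2 * N a / N v + 1
  have hR : R * N v = 2 * N a + N v := by rw [add_mul, div_mul_cancel₀ _ hvpos.ne', one_mul]
  have hRpos : 0 < R := by linarith
  have hfar : ∀ t : ℝ, |t| = R → N (a + (0 : ℝ) • v) ≤ N (a + t • v) := fun t ht => by
    have := hN.sub_le_add_smul a v t
    rw [ht] at this
    simp only [zero_smul, add_zero]
    linarith
  obtain ⟨σ, -, hσ⟩ := (hN.convexOn_add_smul a v).exists_isMinOn_mem_Ioo
    (show (0 : ℝ) ∈ Ioo (-R) R from ⟨by linarith, hRpos⟩)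
    (hfar _ (by rw [abs_neg, abs_of_pos hRpos])) (hfar _ (abs_of_pos hRpos))
  exact ⟨σ, BirkhoffOrthogonal.add_smul_iff.2 hσ⟩

lemma exists_birkhoffOrthogonal_smul_sub_smul (hN : IsNorm N) {w u : ℝ × ℝ} (hwu : N w = N u) :
    ∃ s ∈ Ioo (-1 : ℝ) 1, BirkhoffOrthogonal N ((1 + s) • w - (1 - s) • u) (w + u) := by
  have hmid : N (w - u) ≤ N w + N u := by
    simpa [sub_eq_add_neg, hN.map_neg] using hN.add_le w (-u)
  have hleft : w - u + (-1 : ℝ) • (w + u) = (-2 : ℝ) • u := by module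
  have hright : w - u + (1 : ℝ) • (w + u) = (2 : ℝ) • w := by module
  obtain ⟨s, hs, hmin⟩ := (hN.convexOn_add_smul (w - u) (w + u)).exists_isMinOn_mem_Ioo
    (show (0 : ℝ) ∈ Ioo (-1) 1 by norm_num)
    (by simp only [hleft, hN.map_smul, zero_smul, add_zero]; norm_num; linarith)
    (by simp only [hright, hN.map_smul, zero_smul, add_zero]; norm_num; linarith)
  refine ⟨s, hs, ?_⟩
  rw [show (1 + s) • w - (1 - s) • u = w - u + s • (w + u) by module]
  exact BirkhoffOrthogonal.add_smul_iff.2 hmin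

end IsNorm

lemma exists_smul_sub_smul_eq_of_det_ne_zero {w u : ℝ × ℝ} (hD : w.1 * u.2 - w.2 * u.1 ≠ 0)
    (b : ℝ × ℝ) : ∃ z : ℝ × ℝ, z.1 • w - z.2 • u = b := by
  refine ⟨((b.1 * u.2 - b.2 * u.1) / (w.1 * u.2 - w.2 * u.1),
    (w.2 * b.1 - w.1 * b.2) / (w.1 * u.2 - w.2 * u.1)), Prod.ext ?_ ?_⟩ <;>
  · simp only [Prod.fst_sub, Prod.snd_sub, Prod.smul_fst, Prod.smul_snd, smul_eq_mul]
    rw [div_mul_eq_mul_div, div_mul_eq_mul_div, div_sub_div_same, div_eq_iff hD]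
    ring

lemma exists_eq_smul_of_det_eq_zero {w u : ℝ × ℝ} (hw : w ≠ 0) (hD : w.1 * u.2 - w.2 * u.1 = 0) :
    ∃ c : ℝ, u = c • w := by
  by_cases hw₁ : w.1 = 0
  · have hw₂ : w.2 ≠ 0 := fun h => hw (Prod.ext hw₁ h)
    have hu₁ : u.1 = 0 := by simpa [hw₁, hw₂] using hD
    exact ⟨u.2 / w.2, Prod.ext (by simp [hu₁, hw₁]) (by simp [hw₂])⟩
  · refine ⟨u.1 / w.1, Prod.ext (by simp [hw₁]) ?_⟩
    simp only [Prod.smul_snd, smul_eq_mul]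
    field_simp
    linarith

theorem exists_line_birkhoffOrthogonal {N : ℝ × ℝ → ℝ} (hN : IsNorm N) {p q w u : ℝ × ℝ}
    (hw : N w = 1) (hu : N u = 1) :
    ∃ z₀ d : ℝ × ℝ, 0 < d.1 ∧ 0 < d.2 ∧ ∀ lam : ℝ,
      BirkhoffOrthogonal N (p + (z₀ + lam • d).1 • w - (q + (z₀ + lam • d).2 • u)) (w + u) := by
  by_cases hD : w.1 * u.2 - w.2 * u.1 = 0
  · have hw₀ : w ≠ 0 := by rintro rfl; simp [hN.map_zero] at hw
    obtain ⟨c, rfl⟩ := exists_eq_smul_of_det_eq_zero hw₀ hD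
    have hc : |c| = 1 := by simpa [hN.map_smul, hw] using hu
    rcases (abs_eq zero_le_one).1 hc with rfl | rfl
    · obtain ⟨σ, hσ⟩ := hN.exists_birkhoffOrthogonal_add_smul (p - q) hw₀
      refine ⟨(σ, 0), (1, 1), one_pos, one_pos, fun lam => ?_⟩
      convert hσ.smul_right 2 using 1 <;> simp <;> module
    · refine ⟨0, (1, 1), one_pos, one_pos, fun lam => ?_⟩
      convert BirkhoffOrthogonal.zero_right N _ using 1
      module
  · obtain ⟨s, hs, horth⟩ := hN.exists_birkhoffOrthogonal_smul_sub_smul (hw.trans hu.symm)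
    obtain ⟨z₀, hz₀⟩ := exists_smul_sub_smul_eq_of_det_ne_zero hD (q - p)
    refine ⟨z₀, (1 + s, 1 - s), by linarith [hs.1], by linarith [hs.2], fun lam => ?_⟩
    convert horth.smul_left hN lam using 1
    simp only [Prod.fst_add, Prod.snd_add, Prod.smul_fst, Prod.smul_snd, smul_eq_mul]
    linear_combination (norm := module) hz₀

theorem exists_valley_of_positive_slope
    (N : ℝ × ℝ → ℝ) (hN : IsNorm N)
    (p q w u : ℝ × ℝ) (hw : N w = 1) (hu : N u = 1)
    (h : ℝ × ℝ → ℝ)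
    (hh : ∀ z : ℝ × ℝ, h z = N ((p + z.1 • w) - (q + z.2 • u))) :
    ∃ z₀ d : ℝ × ℝ, 0 < d.1 ∧ 0 < d.2 ∧
      ∀ lam : ℝ,
        AntitoneOn (fun t => h ((z₀ + lam • d).1 + t, (z₀ + lam • d).2 - t)) (Set.Iic 0) ∧
        MonotoneOn (fun t => h ((z₀ + lam • d).1 + t, (z₀ + lam • d).2 - t)) (Set.Ici 0) := by
  obtain ⟨z₀, d, hd₁, hd₂, horth⟩ := exists_line_birkhoffOrthogonal hN (p := p) (q := q) hw hu
  refine ⟨z₀, d, hd₁, hd₂, fun lam => ?_⟩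
  have hdiag : ∀ z : ℝ × ℝ, (fun t => h (z.1 + t, z.2 - t)) =
      fun t : ℝ => N (p + z.1 • w - (q + z.2 • u) + t • (w + u)) := fun z => by
    ext t
    rw [hh]
    congr 1
    module
  rw [hdiag]
  exact (horth lam).antitoneOn_monotoneOn hN
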